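/- arXiv:1905.12303 — 5 statements merged into one kernel-verified Lean document; each statement's English description precedes it below -/
import Mathlib

section
/- Let λ > 0 and let ψ(x) = Σ_{k∈ℤ², ‖k‖=λ} c_k e^{i k·x} be a trigonometric polynomial on the torus 𝕋² whose frequencies all lie on the circle of radius λ, normalized so that ∫_{𝕋²}|ψ(x)|² dx = (2π)² Σ_k |c_k|² = 1. Then ∫_{𝕋²}|ψ(x)|⁴ dx ≤ 3/(2π)²; equivalently ‖ψ‖_{L⁴(𝕋²)} ≤ 3^{1/4}/√(2π). -/
/-!
Since `|ψ|⁴ = |ψ²|²` and `ψ²` is again a trigonometric polynomial, with coefficient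
`d_m = ∑_{k + l = m} c_k c_l` at frequency `m`, Parseval gives `∫|ψ|⁴ = (2π)² ∑_m |d_m|²`.
For `m ≠ 0` a frequency `k` with `‖k‖ = ‖m - k‖ = λ` lies on the circle of radius `λ` and on a
line with normal `m`, so at most two pairs `(k, m - k)` contribute and Cauchy–Schwarz gives
`|d_m|² ≤ 2 ∑_{k + l = m} |c_k|² |c_l|²`; these add up to at most `2 S²`, where
`S = ∑ |c_k|² = (2π)⁻²`. By AM–GM the remaining term satisfies `|d_0| ≤ S`, hence
`∑_m |d_m|² ≤ 3 S²`.
-/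

open MeasureTheory Filter Topology

/-- Euclidean norm on `Fin n → ℝ`. -/
noncomputable def euclNorm {n : ℕ} (v : Fin n → ℝ) : ℝ := Real.sqrt (∑ i, (v i)^2)

/-- Euclidean inner product on `Fin n → ℝ`. -/
noncomputable def dotp {n : ℕ} (v w : Fin n → ℝ) : ℝ := ∑ i, v i * w i

/-- The fundamental domain `[0, 2π]ⁿ` of the flat torus `ℝⁿ/(2πℤ)ⁿ`. -/
noncomputable def torusBox (n : ℕ) : Set (Fin n → ℝ) :=
  Set.univ.pi fun _ => Set.Icc 0 (2*Real.pi)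

/-- The trigonometric polynomial `x ↦ ∑_{k ∈ F} c_k e^{i k·x}`. -/
noncomputable def eigenSum {n : ℕ} (F : Finset (Fin n → ℤ)) (c : (Fin n → ℤ) → ℂ)
    (x : Fin n → ℝ) : ℂ :=
  ∑ k ∈ F, c k * Complex.exp (Complex.I * (dotp (fun i => (k i : ℝ)) x : ℝ))

open Complex
open scoped Pointwise

noncomputable def torusChar {n : ℕ} (k : Fin n → ℤ) (x : Fin n → ℝ) : ℂ :=
  exp (I * (dotp (fun i => (k i : ℝ)) x : ℝ))

lemma eigenSum_eq_sum_torusChar {n : ℕ} (F : Finset (Fin n → ℤ)) (c : (Fin n → ℤ) → ℂ)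
    (x : Fin n → ℝ) : eigenSum F c x = ∑ k ∈ F, c k * torusChar k x := rfl

lemma torusChar_add {n : ℕ} (k l : Fin n → ℤ) (x : Fin n → ℝ) :
    torusChar (k + l) x = torusChar k x * torusChar l x := by
  simp only [torusChar, dotp, ← exp_add, Pi.add_apply, Int.cast_add, add_mul,
    Finset.sum_add_distrib]
  push_cast
  ring_nf

lemma conj_torusChar {n : ℕ} (k : Fin n → ℤ) (x : Fin n → ℝ) :
    (starRingEnd ℂ) (torusChar k x) = torusChar (-k) x := by
  simp only [torusChar, dotp, ← exp_conj, map_mul, conj_I, conj_ofReal, Pi.neg_apply,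
    Int.cast_neg, neg_mul, Finset.sum_neg_distrib, ofReal_neg, mul_neg]

lemma continuous_torusChar {n : ℕ} (k : Fin n → ℤ) : Continuous (torusChar k) := by
  unfold torusChar dotp
  fun_prop

lemma integral_exp_int_mul_Icc (k : ℤ) :
    ∫ t in Set.Icc (0 : ℝ) (2 * Real.pi), exp (I * k * t) =
      if k = 0 then (2 * Real.pi : ℂ) else 0 := by
  rw [integral_Icc_eq_integral_Ioc, ← intervalIntegral.integral_of_le Real.two_pi_pos.le]
  split_ifs with hk
  · simp [hk]
  · have hIk : I * k ≠ 0 := by simp [hk]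
    rw [integral_exp_mul_complex hIk]
    have : I * k * (2 * Real.pi : ℝ) = k * (2 * Real.pi * I) := by push_cast; ring
    rw [this, exp_int_mul_two_pi_mul_I]
    simp

lemma integral_torusChar {n : ℕ} (k : Fin n → ℤ) :
    ∫ x in torusBox n, torusChar k x = if k = 0 then ((2 * Real.pi) ^ n : ℂ) else 0 := by
  have hprod : ∀ x, torusChar k x = ∏ i, exp (I * k i * x i) := by
    intro x
    simp only [torusChar, dotp, ← exp_sum, ofReal_sum, Finset.mul_sum]
    push_cast
    ring_nf
  simp_rw [hprod, torusBox, volume_pi, Measure.restrict_pi_pi]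
  rw [integral_fintype_prod_eq_prod (fun i (t : ℝ) => exp (I * k i * t))]
  simp_rw [integral_exp_int_mul_Icc]
  rw [Finset.prod_ite_zero, Finset.prod_const, Finset.card_univ, Fintype.card_fin]
  simp only [Finset.mem_univ, forall_const, funext_iff, Pi.zero_apply]

lemma isCompact_torusBox (n : ℕ) : IsCompact (torusBox n) :=
  isCompact_univ_pi fun _ => isCompact_Icc

lemma integrableOn_torusChar {n : ℕ} (k : Fin n → ℤ) : IntegrableOn (torusChar k) (torusBox n) :=
  (continuous_torusChar k).continuousOn.integrableOn_compact (isCompact_torusBox n)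

lemma ofReal_norm_eigenSum_sq {n : ℕ} (G : Finset (Fin n → ℤ)) (d : (Fin n → ℤ) → ℂ)
    (x : Fin n → ℝ) :
    ((‖eigenSum G d x‖ ^ 2 : ℝ) : ℂ) =
      ∑ k ∈ G, ∑ l ∈ G, d k * (starRingEnd ℂ) (d l) * torusChar (k - l) x := by
  rw [ofReal_pow, ← mul_conj', eigenSum_eq_sum_torusChar, map_sum, Finset.sum_mul_sum]
  refine Finset.sum_congr rfl fun k _ => Finset.sum_congr rfl fun l _ => ?_
  rw [map_mul, conj_torusChar, sub_eq_add_neg, torusChar_add]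
  ring

theorem integral_norm_eigenSum_sq {n : ℕ} (G : Finset (Fin n → ℤ)) (d : (Fin n → ℤ) → ℂ) :
    ∫ x in torusBox n, ‖eigenSum G d x‖ ^ 2 = (2 * Real.pi) ^ n * ∑ m ∈ G, ‖d m‖ ^ 2 := by
  apply ofReal_injective
  rw [← integral_complex_ofReal]
  simp_rw [ofReal_norm_eigenSum_sq]
  rw [integral_finsetSum _ fun k _ => integrable_finsetSum _ fun l _ =>
    (integrableOn_torusChar _).const_mul _]
  simp_rw [integral_finsetSum _ fun l _ => (integrableOn_torusChar _).const_mul _,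
    integral_const_mul, integral_torusChar, sub_eq_zero, mul_ite, mul_zero, Finset.sum_ite_eq]
  rw [Finset.sum_ite_of_true fun _ hm => hm]
  push_cast
  simp_rw [mul_conj', Finset.mul_sum, mul_comm]

section AddPairs

variable {α β : Type*} [DecidableEq α]

def addPairs [Add α] (F G : Finset α) (m : α) : Finset (α × α) :=
  {q ∈ F ×ˢ G | q.1 + q.2 = m}

noncomputable def addConv [Add α] (F G : Finset α) (c d : α → ℂ) (m : α) : ℂ :=
  ∑ q ∈ addPairs F G m, c q.1 * d q.2

variable [AddCancelCommMonoid α] (F G : Finset α)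

lemma injOn_fst_addPairs (m : α) : Set.InjOn Prod.fst (addPairs F G m : Set (α × α)) := by
  intro q hq q' hq' h
  simp only [addPairs, Finset.coe_filter, Set.mem_ofPred_eq] at hq hq'
  exact Prod.ext h (add_left_cancel (a := q.1) (by rw [hq.2, h, hq'.2]))

lemma sum_addPairs_fst_le (m : α) {f : α → ℝ} (hf : ∀ k, 0 ≤ f k) :
    ∑ q ∈ addPairs F G m, f q.1 ≤ ∑ k ∈ F, f k := by
  rw [← Finset.sum_image (injOn_fst_addPairs F G m)]
  refine Finset.sum_le_sum_of_subset_of_nonneg ?_ fun k _ _ => hf k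
  intro k hk
  obtain ⟨q, hq, rfl⟩ := Finset.mem_image.1 hk
  exact (Finset.mem_product.1 (Finset.mem_filter.1 hq).1).1

lemma sum_addPairs_snd_le (m : α) {f : α → ℝ} (hf : ∀ k, 0 ≤ f k) :
    ∑ q ∈ addPairs F G m, f q.2 ≤ ∑ k ∈ G, f k := by
  have hswap : addPairs F G m = (addPairs G F m).map (Equiv.prodComm α α).toEmbedding := by
    ext q
    simp [addPairs, add_comm, and_comm]
  rw [hswap, Finset.sum_map]
  exact sum_addPairs_fst_le G F m hf

lemma sum_sum_addPairs [AddCommMonoid β] (f : α × α → β) :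
    ∑ m ∈ F + G, ∑ q ∈ addPairs F G m, f q = ∑ q ∈ F ×ˢ G, f q :=
  Finset.sum_fiberwise_of_maps_to
    (fun _ hq => Finset.add_mem_add (Finset.mem_product.1 hq).1 (Finset.mem_product.1 hq).2) f

variable (c d : α → ℂ)

lemma norm_addConv_le (m : α) :
    ‖addConv F G c d m‖ ≤ (∑ k ∈ F, ‖c k‖ ^ 2 + ∑ k ∈ G, ‖d k‖ ^ 2) / 2 := by
  calc ‖addConv F G c d m‖ ≤ ∑ q ∈ addPairs F G m, ‖c q.1‖ * ‖d q.2‖ := by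
        simpa only [addConv, norm_mul] using norm_sum_le (addPairs F G m) fun q => c q.1 * d q.2
    _ ≤ ∑ q ∈ addPairs F G m, (‖c q.1‖ ^ 2 + ‖d q.2‖ ^ 2) / 2 :=
        Finset.sum_le_sum fun q _ => by nlinarith [sq_nonneg (‖c q.1‖ - ‖d q.2‖)]
    _ ≤ _ := by
        rw [← Finset.sum_div, Finset.sum_add_distrib]
        gcongr
        · exact sum_addPairs_fst_le F G m fun k => sq_nonneg ‖c k‖
        · exact sum_addPairs_snd_le F G m fun k => sq_nonneg ‖d k‖

lemma norm_addConv_sq_le_card_mul (m : α) :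
    ‖addConv F G c d m‖ ^ 2 ≤
      (addPairs F G m).card * ∑ q ∈ addPairs F G m, ‖c q.1‖ ^ 2 * ‖d q.2‖ ^ 2 := by
  calc ‖addConv F G c d m‖ ^ 2 ≤ (∑ q ∈ addPairs F G m, ‖c q.1 * d q.2‖) ^ 2 := by
        gcongr
        exact norm_sum_le _ _
    _ ≤ _ := by
        simpa only [norm_mul, mul_pow] using
          sq_sum_le_card_mul_sum_sq (s := addPairs F G m) (f := fun q => ‖c q.1 * d q.2‖)

end AddPairs

lemma eigenSum_mul_eigenSum {n : ℕ} (F G : Finset (Fin n → ℤ)) (c d : (Fin n → ℤ) → ℂ)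
    (x : Fin n → ℝ) : eigenSum F c x * eigenSum G d x = eigenSum (F + G) (addConv F G c d) x := by
  simp only [eigenSum_eq_sum_torusChar, addConv]
  rw [Finset.sum_mul_sum, ← Finset.sum_product', ← sum_sum_addPairs]
  simp_rw [Finset.sum_mul]
  refine Finset.sum_congr rfl fun m _ => Finset.sum_congr rfl fun q hq => ?_
  rw [← (Finset.mem_filter.1 hq).2, torusChar_add]
  ring

section CircleLine

variable {R : Type*} [CommRing R]

lemma det_eq_zero_of_dot_eq_zero [IsDomain R] {a b d : Fin 2 → R} (hd : d ≠ 0)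
    (ha : a 0 * d 0 + a 1 * d 1 = 0) (hb : b 0 * d 0 + b 1 * d 1 = 0) :
    a 0 * b 1 - a 1 * b 0 = 0 := by
  have hd' : d 0 ≠ 0 ∨ d 1 ≠ 0 := by
    rwa [Ne, funext_iff, Fin.forall_fin_two, not_and_or] at hd
  rcases hd' with hd0 | hd1
  · exact (mul_eq_zero.1 (by linear_combination b 1 * ha - a 1 * hb :
      (a 0 * b 1 - a 1 * b 0) * d 0 = 0)).resolve_right hd0
  · exact (mul_eq_zero.1 (by linear_combination a 0 * hb - b 0 * ha :
      (a 0 * b 1 - a 1 * b 0) * d 1 = 0)).resolve_right hd1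

lemma card_le_two_of_circle_inter_line [LinearOrder R] [IsStrictOrderedRing R] {r s : R}
    {m : Fin 2 → R} (hm : m ≠ 0) (T : Finset (Fin 2 → R))
    (hT : ∀ k ∈ T, k 0 ^ 2 + k 1 ^ 2 = r ∧ m 0 * k 0 + m 1 * k 1 = s) : T.card ≤ 2 := by
  by_contra! hcard
  obtain ⟨k₁, hk₁, k₂, hk₂, k₃, hk₃, h12, h13, h23⟩ := Finset.two_lt_card.1 hcard
  obtain ⟨circ₁, line₁⟩ := hT k₁ hk₁
  obtain ⟨circ₂, line₂⟩ := hT k₂ hk₂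
  obtain ⟨circ₃, line₃⟩ := hT k₃ hk₃
  -- `m` and `kᵢ + kⱼ` are both orthogonal to the chord `kᵢ - kⱼ`, hence parallel.
  have det₁₂ := det_eq_zero_of_dot_eq_zero (a := m) (b := k₁ + k₂) (sub_ne_zero.2 h12)
    (by simp only [Pi.sub_apply]; linear_combination line₁ - line₂)
    (by simp only [Pi.sub_apply, Pi.add_apply]; linear_combination circ₁ - circ₂)
  have det₁₃ := det_eq_zero_of_dot_eq_zero (a := m) (b := k₁ + k₃) (sub_ne_zero.2 h13)
    (by simp only [Pi.sub_apply]; linear_combination line₁ - line₃)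
    (by simp only [Pi.sub_apply, Pi.add_apply]; linear_combination circ₁ - circ₃)
  simp only [Pi.add_apply] at det₁₂ det₁₃
  have hm' : m 0 ^ 2 + m 1 ^ 2 ≠ 0 := by
    have : m 0 ≠ 0 ∨ m 1 ≠ 0 := by
      rwa [Ne, funext_iff, Fin.forall_fin_two, not_and_or] at hm
    rcases this with h | h <;> positivity
  have h0 : k₂ 0 = k₃ 0 := sub_eq_zero.1 <| (mul_eq_zero.1 (by
    linear_combination m 0 * (line₂ - line₃) - m 1 * (det₁₂ - det₁₃) :
      (m 0 ^ 2 + m 1 ^ 2) * (k₂ 0 - k₃ 0) = 0)).resolve_left hm'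
  have h1 : k₂ 1 = k₃ 1 := sub_eq_zero.1 <| (mul_eq_zero.1 (by
    linear_combination m 1 * (line₂ - line₃) + m 0 * (det₁₂ - det₁₃) :
      (m 0 ^ 2 + m 1 ^ 2) * (k₂ 1 - k₃ 1) = 0)).resolve_left hm'
  exact h23 (funext fun i => by fin_cases i <;> assumption)

end CircleLine

lemma card_addPairs_le_two {F : Finset (Fin 2 → ℤ)} {r : ℝ}
    (hF : ∀ k ∈ F, (k 0 : ℝ) ^ 2 + (k 1 : ℝ) ^ 2 = r) {m : Fin 2 → ℤ} (hm : m ≠ 0) :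
    (addPairs F F m).card ≤ 2 := by
  set toReal : (Fin 2 → ℤ) → Fin 2 → ℝ := fun k i => k i
  have hinj : Set.InjOn (toReal ∘ Prod.fst) ↑(addPairs F F m) :=
    fun _ hq _ hq' h => injOn_fst_addPairs F F m hq hq'
      (funext fun i => Int.cast_injective (congrFun h i))
  rw [← Finset.card_image_of_injOn hinj]
  -- `k` and `m - k` on the circle of radius `√r` force `2 m·k = |m|²`.
  refine card_le_two_of_circle_inter_line (r := r) (m := fun i => 2 * (m i : ℝ))
    (s := (m 0 : ℝ) ^ 2 + (m 1 : ℝ) ^ 2) ?_ _ ?_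
  · simpa [funext_iff] using hm
  · simp only [Finset.mem_image, addPairs, Finset.mem_filter, Finset.mem_product]
    rintro _ ⟨⟨k, l⟩, ⟨⟨hk, hl⟩, rfl⟩, rfl⟩
    have hk' := hF k hk
    simp only [Function.comp_apply, Pi.add_apply, Int.cast_add, toReal]
    exact ⟨hk', by linear_combination hk' - hF l hl⟩

theorem sum_norm_addConv_sq_le {F : Finset (Fin 2 → ℤ)} {r : ℝ}
    (hF : ∀ k ∈ F, (k 0 : ℝ) ^ 2 + (k 1 : ℝ) ^ 2 = r) (c : (Fin 2 → ℤ) → ℂ) :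
    ∑ m ∈ F + F, ‖addConv F F c c m‖ ^ 2 ≤ 3 * (∑ k ∈ F, ‖c k‖ ^ 2) ^ 2 := by
  set S := ∑ k ∈ F, ‖c k‖ ^ 2
  set g : (Fin 2 → ℤ) × (Fin 2 → ℤ) → ℝ := fun q => ‖c q.1‖ ^ 2 * ‖c q.2‖ ^ 2
  have hg : ∀ q, 0 ≤ g q := fun q => by positivity
  have hpoint : ∀ m, ‖addConv F F c c m‖ ^ 2 ≤
      (if m = 0 then S ^ 2 else 0) + 2 * ∑ q ∈ addPairs F F m, g q := by
    intro m
    split_ifs with hm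
    · have htail : 0 ≤ 2 * ∑ q ∈ addPairs F F m, g q :=
        mul_nonneg zero_le_two (Finset.sum_nonneg fun q _ => hg q)
      have h0 : ‖addConv F F c c m‖ ≤ S := by simpa using norm_addConv_le F F c c m
      nlinarith [norm_nonneg (addConv F F c c m)]
    · calc ‖addConv F F c c m‖ ^ 2 ≤ (addPairs F F m).card * ∑ q ∈ addPairs F F m, g q :=
            norm_addConv_sq_le_card_mul F F c c m
        _ ≤ 0 + 2 * ∑ q ∈ addPairs F F m, g q := by
            rw [zero_add]
            gcongr
            exact_mod_cast card_addPairs_le_two hF hm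
  have hpairs : ∑ q ∈ F ×ˢ F, g q = S ^ 2 := by
    rw [Finset.sum_product, sq, Finset.sum_mul_sum]
  calc ∑ m ∈ F + F, ‖addConv F F c c m‖ ^ 2
      ≤ ∑ m ∈ F + F, ((if m = 0 then S ^ 2 else 0) + 2 * ∑ q ∈ addPairs F F m, g q) :=
        Finset.sum_le_sum fun m _ => hpoint m
    _ = (if 0 ∈ F + F then S ^ 2 else 0) + 2 * S ^ 2 := by
        rw [Finset.sum_add_distrib, Finset.sum_ite_eq', ← Finset.mul_sum, sum_sum_addPairs,
          hpairs]
    _ ≤ S ^ 2 + 2 * S ^ 2 := by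
        gcongr
        split_ifs
        exacts [le_rfl, by positivity]
    _ = 3 * S ^ 2 := by ring

lemma euclNorm_sq {n : ℕ} (v : Fin n → ℝ) : euclNorm v ^ 2 = ∑ i, v i ^ 2 :=
  Real.sq_sqrt (Finset.sum_nonneg fun i _ => sq_nonneg (v i))

theorem statement0_general (lam : ℝ) (F : Finset (Fin 2 → ℤ))
    (c : (Fin 2 → ℤ) → ℂ) (ψ : (Fin 2 → ℝ) → ℂ)
    (hF : ∀ k ∈ F, euclNorm (fun i => (k i : ℝ)) = lam)
    (hψ : ∀ x, ψ x = eigenSum F c x)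
    (hnormc : (2 * Real.pi)^2 * ∑ k ∈ F, ‖c k‖ ^ 2 = 1) :
    ∫ x in torusBox 2, ‖ψ x‖ ^ 4 ≤ 3 / (2 * Real.pi)^2 := by
  have hcircle : ∀ k ∈ F, (k 0 : ℝ) ^ 2 + (k 1 : ℝ) ^ 2 = lam ^ 2 := fun k hk => by
    rw [← hF k hk, euclNorm_sq, Fin.sum_univ_two]
  have hψ4 : ∀ x, ‖ψ x‖ ^ 4 = ‖eigenSum (F + F) (addConv F F c c) x‖ ^ 2 := fun x => by
    rw [← eigenSum_mul_eigenSum, hψ, ← sq, norm_pow, ← pow_mul]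
  have hS : ∑ k ∈ F, ‖c k‖ ^ 2 = 1 / (2 * Real.pi) ^ 2 :=
    eq_one_div_of_mul_eq_one_right hnormc
  calc ∫ x in torusBox 2, ‖ψ x‖ ^ 4
      = (2 * Real.pi) ^ 2 * ∑ m ∈ F + F, ‖addConv F F c c m‖ ^ 2 := by
        simp_rw [hψ4]
        exact integral_norm_eigenSum_sq _ _
    _ ≤ (2 * Real.pi) ^ 2 * (3 * (∑ k ∈ F, ‖c k‖ ^ 2) ^ 2) := by
        gcongr
        exact sum_norm_addConv_sq_le hcircle c
    _ = 3 / (2 * Real.pi) ^ 2 := by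
        rw [hS]
        field_simp

/-- **Zygmund's L⁴ bound on the flat torus `𝕋²`**: if `ψ(x) = ∑_{‖k‖ = λ} c_k e^{i k·x}`
is a Laplace eigenfunction on `𝕋² = ℝ²/(2πℤ)²` with
`∫_{𝕋²} |ψ|² dx = (2π)² ∑_k |c_k|² = 1`, then `∫_{𝕋²} |ψ|⁴ dx ≤ 3/(2π)²`. -/
theorem statement0 (lam : ℝ) (hlam : 0 < lam) (F : Finset (Fin 2 → ℤ))
    (c : (Fin 2 → ℤ) → ℂ) (ψ : (Fin 2 → ℝ) → ℂ)
    (hF : ∀ k ∈ F, euclNorm (fun i => (k i : ℝ)) = lam)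
    (hψ : ∀ x, ψ x = eigenSum F c x)
    (hnorm : ∫ x in torusBox 2, ‖ψ x‖ ^ 2 = 1)
    (hnormc : (2 * Real.pi)^2 * ∑ k ∈ F, ‖c k‖ ^ 2 = 1) :
    ∫ x in torusBox 2, ‖ψ x‖ ^ 4 ≤ 3 / (2 * Real.pi)^2 :=
  statement0_general lam F c ψ hF hψ hnormc
end

section
/- For every integer n ≥ 1 there exists a constant C > 0 such that for all λ ≥ 1, the number of lattice points k ∈ ℤⁿ with Euclidean norm ‖k‖ ≤ λ satisfies |#{k ∈ ℤⁿ : ‖k‖ ≤ λ} − ω_n λⁿ| ≤ C λ^{n−1}, where ω_n = π^{n/2}/Γ(n/2 + 1) is the volume of the unit ball in ℝⁿ. -/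
/-!
Gauss's cube argument. Attach to each lattice point `k` the unit cube `k + [0,1)ⁿ`; these cubes
are disjoint, have volume one and diameter `√n`. The cubes of the lattice points in the ball of
radius `λ` therefore cover the ball of radius `λ - √n` and lie in the ball of radius `λ + √n`, so
the count is squeezed between `ω_n (λ - √n)ⁿ` and `ω_n (λ + √n)ⁿ`, two quantities that differ
from `ω_n λⁿ` by `O(λⁿ⁻¹)`.
-/

open MeasureTheory Filter Topology

open Real
open Fintype (card)

section

variable {ι : Type*}

lemma EuclideanSpace.norm_le_sqrt_card_of_forall_abs_le_one [Fintype ι]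
    (v : EuclideanSpace ℝ ι) (hv : ∀ i, |v i| ≤ 1) : ‖v‖ ≤ √(card ι) := by
  rw [EuclideanSpace.norm_eq]
  gcongr
  calc ∑ i, ‖v i‖ ^ 2 ≤ ∑ _i : ι, (1 : ℝ) :=
        Finset.sum_le_sum fun i _ => pow_le_one₀ (norm_nonneg _) (hv i)
    _ = card ι := by simp

lemma volume_setOf_norm_toLp_le [Fintype ι] [Nonempty ι] (r : ℝ) :
    volume {x : ι → ℝ | ‖WithLp.toLp 2 x‖ ≤ r} =
      .ofReal r ^ card ι * .ofReal (√π ^ card ι / Gamma (card ι / 2 + 1)) := by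
  have : {x : ι → ℝ | ‖WithLp.toLp 2 x‖ ≤ r} =
      WithLp.toLp 2 ⁻¹' Metric.closedBall (0 : EuclideanSpace ℝ ι) r := by
    ext; simp
  rw [this, (PiLp.volume_preserving_toLp ι).measure_preimage
    measurableSet_closedBall.nullMeasurableSet, EuclideanSpace.volume_closedBall]

lemma measureReal_setOf_norm_toLp_le [Fintype ι] [Nonempty ι] (r : ℝ) :
    volume.real {x : ι → ℝ | ‖WithLp.toLp 2 x‖ ≤ r} =
      √π ^ card ι / Gamma (card ι / 2 + 1) * max r 0 ^ card ι := by
  rw [measureReal_def, volume_setOf_norm_toLp_le, ENNReal.toReal_mul, ENNReal.toReal_pow,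
    ENNReal.toReal_ofReal', ENNReal.toReal_ofReal (by positivity), mul_comm]

def unitCube (k : ι → ℤ) : Set (ι → ℝ) :=
  Set.univ.pi fun i => Set.Ico (k i : ℝ) (k i + 1)

lemma mem_unitCube_iff {k : ι → ℤ} {x : ι → ℝ} : x ∈ unitCube k ↔ ∀ i, ⌊x i⌋ = k i := by
  simp only [unitCube, Set.mem_univ_pi, Set.mem_Ico, Int.floor_eq_iff]

lemma mem_unitCube_floor (x : ι → ℝ) : x ∈ unitCube fun i => ⌊x i⌋ :=
  mem_unitCube_iff.mpr fun _ => rfl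

lemma measurableSet_unitCube [Countable ι] (k : ι → ℤ) : MeasurableSet (unitCube k) :=
  .univ_pi fun _ => measurableSet_Ico

lemma volume_unitCube [Fintype ι] (k : ι → ℤ) : volume (unitCube k) = 1 := by
  simp [unitCube, volume_pi_pi]

lemma pairwise_disjoint_unitCube : Pairwise (Function.onFun Disjoint (unitCube (ι := ι))) :=
  fun _ _ hkl => Set.disjoint_left.mpr fun _ hk hl =>
    hkl <| funext fun i => (mem_unitCube_iff.mp hk i).symm.trans (mem_unitCube_iff.mp hl i)

lemma volume_biUnion_unitCube [Fintype ι] {s : Set (ι → ℤ)} (hs : s.Finite) :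
    volume (⋃ k ∈ s, unitCube k) = s.ncard := by
  rw [← hs.coe_toFinset, Set.ncard_coe_finset]
  simp only [Finset.mem_coe]
  rw [measure_biUnion_finset (fun k _ l _ hkl => pairwise_disjoint_unitCube hkl)
    (fun k _ => measurableSet_unitCube k)]
  simp [volume_unitCube]

lemma norm_toLp_sub_le_of_mem_unitCube [Fintype ι] {k : ι → ℤ} {x : ι → ℝ}
    (hx : x ∈ unitCube k) :
    ‖WithLp.toLp 2 x - WithLp.toLp 2 (fun i => (k i : ℝ))‖ ≤ √(card ι) := by
  refine EuclideanSpace.norm_le_sqrt_card_of_forall_abs_le_one _ fun i => ?_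
  have hxi := (Set.mem_univ_pi.mp hx) i
  simp only [Set.mem_Ico] at hxi
  simp only [PiLp.sub_apply, abs_le]
  constructor <;> linarith

variable [Fintype ι]

variable (ι) in
def latticePointsInBall (r : ℝ) : Set (ι → ℤ) :=
  {k | ‖WithLp.toLp 2 (fun i => (k i : ℝ))‖ ≤ r}

lemma mem_latticePointsInBall {r : ℝ} {k : ι → ℤ} :
    k ∈ latticePointsInBall ι r ↔ ‖WithLp.toLp 2 (fun i => (k i : ℝ))‖ ≤ r :=
  Iff.rfl

lemma finite_latticePointsInBall (r : ℝ) : (latticePointsInBall ι r).Finite := by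
  refine (Set.Finite.pi fun _ => Set.finite_Icc (-⌈r⌉) ⌈r⌉).subset fun k hk i _ => ?_
  have : |(k i : ℝ)| ≤ ⌈r⌉ := ((PiLp.norm_apply_le _ i).trans hk).trans (Int.le_ceil r)
  exact abs_le.mp (mod_cast this)

lemma measureReal_biUnion_unitCube_latticePointsInBall (r : ℝ) :
    volume.real (⋃ k ∈ latticePointsInBall ι r, unitCube k) =
      (latticePointsInBall ι r).ncard := by
  simp [measureReal_def, volume_biUnion_unitCube (finite_latticePointsInBall r)]

lemma biUnion_unitCube_latticePointsInBall_subset (r : ℝ) :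
    ⋃ k ∈ latticePointsInBall ι r, unitCube k ⊆
      {x : ι → ℝ | ‖WithLp.toLp 2 x‖ ≤ r + √(card ι)} := by
  simp only [Set.iUnion_subset_iff]
  intro k hk x hx
  calc ‖WithLp.toLp 2 x‖
      ≤ ‖WithLp.toLp 2 (fun i => (k i : ℝ))‖
          + ‖WithLp.toLp 2 x - WithLp.toLp 2 (fun i => (k i : ℝ))‖ :=
        norm_le_norm_add_norm_sub' _ _
    _ ≤ r + √(card ι) :=
        add_le_add (mem_latticePointsInBall.mp hk) (norm_toLp_sub_le_of_mem_unitCube hx)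

lemma subset_biUnion_unitCube_latticePointsInBall (r : ℝ) :
    {x : ι → ℝ | ‖WithLp.toLp 2 x‖ ≤ r - √(card ι)} ⊆
      ⋃ k ∈ latticePointsInBall ι r, unitCube k := by
  intro x hx
  refine Set.mem_biUnion (x := fun i => ⌊x i⌋) (mem_latticePointsInBall.mpr ?_)
    (mem_unitCube_floor x)
  calc ‖WithLp.toLp 2 (fun i => (⌊x i⌋ : ℝ))‖
      ≤ ‖WithLp.toLp 2 x‖ + ‖WithLp.toLp 2 x - WithLp.toLp 2 (fun i => (⌊x i⌋ : ℝ))‖ :=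
        norm_le_norm_add_norm_sub _ _
    _ ≤ r := by linarith [norm_toLp_sub_le_of_mem_unitCube (mem_unitCube_floor x), hx.out]

variable [Nonempty ι]

lemma ncard_latticePointsInBall_le {r : ℝ} (hr : 0 ≤ r) :
    ((latticePointsInBall ι r).ncard : ℝ) ≤
      √π ^ card ι / Gamma (card ι / 2 + 1) * (r + √(card ι)) ^ card ι := by
  have h := measureReal_mono (μ := volume) (biUnion_unitCube_latticePointsInBall_subset r)
    (by rw [volume_setOf_norm_toLp_le (ι := ι)]; finiteness)
  rwa [measureReal_biUnion_unitCube_latticePointsInBall, measureReal_setOf_norm_toLp_le,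
    max_eq_left (by positivity)] at h

lemma le_ncard_latticePointsInBall (r : ℝ) :
    √π ^ card ι / Gamma (card ι / 2 + 1) * max (r - √(card ι)) 0 ^ card ι ≤
      (latticePointsInBall ι r).ncard := by
  have h := measureReal_mono (μ := volume)
    (subset_biUnion_unitCube_latticePointsInBall (ι := ι) r)
    (by rw [volume_biUnion_unitCube (finite_latticePointsInBall r)]; finiteness)
  rwa [measureReal_biUnion_unitCube_latticePointsInBall, measureReal_setOf_norm_toLp_le] at h

end

lemma abs_sub_mul_pow_le_of_le_of_le {N ω r a : ℝ} (n : ℕ) (hω : 0 ≤ ω) (hr : 0 ≤ r)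
    (ha : 0 ≤ a) (hlo : ω * max (r - a) 0 ^ n ≤ N) (hup : N ≤ ω * (r + a) ^ n) :
    |N - ω * r ^ n| ≤ ω * (a * n * (r + a) ^ (n - 1)) := by
  have key : ∀ t, 0 ≤ t → |t - r| ≤ a → t ≤ r + a →
      |t ^ n - r ^ n| ≤ a * n * (r + a) ^ (n - 1) := fun t ht htr htR =>
    (abs_pow_sub_pow_le t r n).trans <| by
      gcongr
      rw [abs_of_nonneg ht, abs_of_nonneg hr]
      exact max_le htR (by linarith)
  have hmax : max (r - a) 0 ≤ r + a := max_le (by linarith) (by linarith)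
  have hlo_pow := key (max (r - a) 0) (le_max_right _ _)
    (abs_le.mpr ⟨by linarith [le_max_left (r - a) 0], by linarith⟩) hmax
  have hup_pow := key (r + a) (by positivity) (by rw [add_sub_cancel_left, abs_of_nonneg ha]) le_rfl
  have hlo_mul := mul_le_mul_of_nonneg_left ((neg_abs_le _).trans' (neg_le_neg hlo_pow)) hω
  have hup_mul := mul_le_mul_of_nonneg_left ((le_abs_self _).trans hup_pow) hω
  rw [abs_le]
  constructor <;> linarith

lemma euclNorm_eq_norm_toLp {n : ℕ} (v : Fin n → ℝ) : euclNorm v = ‖WithLp.toLp 2 v‖ := by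
  simp [euclNorm, EuclideanSpace.norm_eq, sq_abs]

/-- **Weyl law for the flat torus (lattice point count)**: for every `n ≥ 1` there is `C > 0`
such that for all `λ ≥ 1`, `|#{k ∈ ℤⁿ : ‖k‖ ≤ λ} − ω_n λⁿ| ≤ C λ^{n−1}`, where
`ω_n = π^{n/2}/Γ(n/2 + 1)` is the volume of the unit ball of `ℝⁿ`. -/
theorem statement2 (n : ℕ) (hn : 1 ≤ n) :
    ∃ C > (0:ℝ), ∀ lam : ℝ, 1 ≤ lam →
      |(({k : Fin n → ℤ | euclNorm (fun i => (k i : ℝ)) ≤ lam}.ncard : ℝ)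
          - (Real.pi ^ ((n : ℝ)/2) / Real.Gamma ((n : ℝ)/2 + 1)) * lam ^ n)|
        ≤ C * lam ^ (n - 1) := by
  have : Nonempty (Fin n) := ⟨⟨0, hn⟩⟩
  set ω := √π ^ n / Gamma (n / 2 + 1)
  have hω : 0 < ω := div_pos (by positivity) (Gamma_pos_of_pos (by positivity))
  have hsqrt : 0 < √(n : ℝ) := Real.sqrt_pos.mpr (by exact_mod_cast hn)
  refine ⟨ω * (√n * n * (1 + √n) ^ (n - 1)), by positivity, fun lam hlam => ?_⟩
  have hset : {k : Fin n → ℤ | euclNorm (fun i => (k i : ℝ)) ≤ lam} =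
      latticePointsInBall (Fin n) lam := by
    ext k; simp [mem_latticePointsInBall, euclNorm_eq_norm_toLp]
  have hlo := le_ncard_latticePointsInBall (ι := Fin n) lam
  have hup := ncard_latticePointsInBall_le (ι := Fin n) (by linarith : 0 ≤ lam)
  simp only [Fintype.card_fin] at hlo hup
  rw [hset, rpow_div_two_eq_sqrt _ pi_nonneg, rpow_natCast]
  calc _ ≤ ω * (√n * n * (lam + √n) ^ (n - 1)) :=
        abs_sub_mul_pow_le_of_le_of_le n hω.le (by linarith) hsqrt.le hlo hup
    _ ≤ ω * (√n * n * ((1 + √n) * lam) ^ (n - 1)) := by gcongr; nlinarith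
    _ = ω * (√n * n * (1 + √n) ^ (n - 1)) * lam ^ (n - 1) := by rw [mul_pow]; ring
end

section
/- Let T > 0, let c ∈ ℝ², and let k₁, k₂, k₃ ∈ ℤ² be three pairwise distinct lattice points lying on the circle of radius T centered at c, i.e. ‖k_i − c‖ = T for i = 1, 2, 3. Then 2T ≤ (max{‖k₁ − k₂‖, ‖k₂ − k₃‖, ‖k₃ − k₁‖})³. -/
open MeasureTheory Filter Topology

lemma euclNorm_sq2 (v : Fin 2 → ℝ) : (euclNorm v)^2 = (v 0)^2 + (v 1)^2 := by
  rw [euclNorm, Fin.sum_univ_two, Real.sq_sqrt (by positivity)]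

lemma euclNorm_nonneg2 {n : ℕ} (v : Fin n → ℝ) : 0 ≤ euclNorm v := Real.sqrt_nonneg _

lemma key_identity (u1 u2 v1 v2 w1 w2 : ℝ)
    (hg1 : u1^2 + u2^2 = v1^2 + v2^2) (hg2 : u1^2 + u2^2 = w1^2 + w2^2) :
    ((u1-v1)^2+(u2-v2)^2) * ((v1-w1)^2+(v2-w2)^2) * ((w1-u1)^2+(w2-u2)^2)
      = 4 * (u1^2+u2^2) * ((v1-u1)*(w2-u2) - (v2-u2)*(w1-u1))^2 := by
  linear_combination (-1 : ℝ) * ((1)*w2^4 + (2)*w1^2*w2^2 + (1)*w1^4 + (-2)*v2*w2^3 + (-2)*v2*w1^2*w2 + (1)*v2^2*w2^2 + (1)*v2^2*w1^2 + (-2)*v1*w1*w2^2 + (-2)*v1*w1^3 + (1)*v1^2*w2^2 + (1)*v1^2*w1^2 + (-2)*u2*w2^3 + (-2)*u2*w1^2*w2 + (2)*u2*v2*w2^2 + (-2)*u2*v2*w1^2 + (-2)*u2*v2^2*w2 + (4)*u2*v1*w1*w2 + (-2)*u2*v1^2*w2 + (-1)*u2^2*w2^2 + (3)*u2^2*w1^2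 + (2)*u2^2*v2*w2 + (1)*u2^2*v2^2 + (-2)*u2^2*v1*w1 + (1)*u2^2*v1^2 + (4)*u2^3*w2 + (-2)*u2^3*v2 + (-2)*u2^4 + (2)*u1*w1*w2^2 + (2)*u1*w1^3 + (4)*u1*v2*w1*w2 + (-2)*u1*v2^2*w1 + (-2)*u1*v1*w2^2 + (2)*u1*v1*w1^2 + (-2)*u1*v1^2*w1 + (-8)*u1*u2*w1*w2 + (4)*u1*u2*v2*w1 + (4)*u1*u2*v1*w2 + (-2)*u1*u2^2*v1 + (-1)*u1^2*w2^2 + (-5)*u1^2*w1^2 + (-2)*u1^2*v2*w2 + (1)*u1^2*v2^2 + (2)*u1^2*v1*w1 + (1)*u1^2*v1^2 + (4)*u1^2*u2*w2 + (-2)*u1^2*u2*v2 + (-2)*u1^3*v1 + (2)*u1^4) * hg1 + (-1 : ℝ) * ((-2)*u2*v2*w2^2 + (-2)*u2*v2*w1^2 + (4)*u2*v2^2*w2 + (4)*u2*v1*v2*w1 + (2)*u2^2*w2^2 + (2)*u2^2*w1^2 + (-4)*u2^2*v2^2 + (-4)*u2^2*v1*w1 + (-4)*u2^3*w2 + (2)*u2^3*v2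 + (2)*u2^4 + (-4)*u1*v2^2*w1 + (-2)*u1*v1*w2^2 + (-2)*u1*v1*w1^2 + (4)*u1*v1*v2*w2 + (4)*u1*u2*v2*w1 + (4)*u1*u2*v1*w2 + (-8)*u1*u2*v1*v2 + (2)*u1*u2^2*v1 + (2)*u1^2*w2^2 + (2)*u1^2*w1^2 + (-4)*u1^2*v2*w2 + (4)*u1^2*v2^2 + (-4)*u1^2*u2*w2 + (2)*u1^2*u2*v2 + (2)*u1^3*v1 + (-2)*u1^4) * hg2

lemma core (T u1 u2 v1 v2 w1 w2 a b e : ℝ) (d : ℤ) (hT : 0 < T)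
    (hU : u1^2 + u2^2 = T^2) (hV : v1^2 + v2^2 = T^2) (hW : w1^2 + w2^2 = T^2)
    (hd : (v1-u1)*(w2-u2) - (v2-u2)*(w1-u1) = (d:ℝ))
    (ha2 : a^2 = (u1-v1)^2 + (u2-v2)^2)
    (hb2 : b^2 = (v1-w1)^2 + (v2-w2)^2)
    (he2 : e^2 = (w1-u1)^2 + (w2-u2)^2)
    (ha : 0 < a) (hb : 0 < b) (he : 0 < e) :
    2 * T ≤ a * b * e := by
  have hkey : a^2 * b^2 * e^2 = 4 * T^2 * (d:ℝ)^2 := by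
    rw [ha2, hb2, he2, key_identity u1 u2 v1 v2 w1 w2 (by linarith) (by linarith), hd, hU]
  have hdne : d ≠ 0 := by
    intro h0
    rw [h0] at hkey
    push_cast at hkey
    have hp : 0 < a^2 * b^2 * e^2 := by positivity
    nlinarith
  have hd1 : (1:ℝ) ≤ (d:ℝ)^2 := by
    have : (1:ℤ) ≤ d^2 := by rcases lt_or_gt_of_ne hdne with h | h <;> nlinarith
    exact_mod_cast this
  nlinarith [mul_pos (mul_pos ha hb) he, sq_nonneg (a*b*e - 2*T)]

/-- **Jarnik's observation**: three pairwise distinct lattice points `k₁, k₂, k₃ ∈ ℤ²` on a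
circle of radius `T` centered at `c` satisfy `2T ≤ (max ‖k_i − k_j‖)³`. -/
theorem statement8 (T : ℝ) (hT : 0 < T) (c : Fin 2 → ℝ) (k₁ k₂ k₃ : Fin 2 → ℤ)
    (h12 : k₁ ≠ k₂) (h23 : k₂ ≠ k₃) (h13 : k₁ ≠ k₃)
    (hc1 : euclNorm (fun i => (k₁ i : ℝ) - c i) = T)
    (hc2 : euclNorm (fun i => (k₂ i : ℝ) - c i) = T)
    (hc3 : euclNorm (fun i => (k₃ i : ℝ) - c i) = T) :
    2 * T ≤
      (max (max (euclNorm (fun i => (k₁ i : ℝ) - (k₂ i : ℝ)))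
                (euclNorm (fun i => (k₂ i : ℝ) - (k₃ i : ℝ))))
           (euclNorm (fun i => (k₃ i : ℝ) - (k₁ i : ℝ)))) ^ 3 := by
  have hU : ((k₁ 0:ℝ) - c 0)^2 + ((k₁ 1:ℝ) - c 1)^2 = T^2 := by
    have h := euclNorm_sq2 (fun i => (k₁ i : ℝ) - c i); rw [hc1] at h; linarith [h]
  have hV : ((k₂ 0:ℝ) - c 0)^2 + ((k₂ 1:ℝ) - c 1)^2 = T^2 := by
    have h := euclNorm_sq2 (fun i => (k₂ i : ℝ) - c i); rw [hc2] at h; linarith [h]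
  have hW : ((k₃ 0:ℝ) - c 0)^2 + ((k₃ 1:ℝ) - c 1)^2 = T^2 := by
    have h := euclNorm_sq2 (fun i => (k₃ i : ℝ) - c i); rw [hc3] at h; linarith [h]
  have hpos : ∀ p q : Fin 2 → ℤ, p ≠ q → 0 < euclNorm (fun i => (p i : ℝ) - (q i : ℝ)) := by
    intro p q hpq
    have hsq := euclNorm_sq2 (fun i => (p i : ℝ) - (q i : ℝ))
    have hnn := euclNorm_nonneg2 (fun i => (p i : ℝ) - (q i : ℝ))
    apply lt_of_le_of_ne hnn
    intro h0
    have hs : ((p 0:ℝ) - (q 0:ℝ))^2 + ((p 1:ℝ) - (q 1:ℝ))^2 = 0 := by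
      rw [← hsq, ← h0]; ring
    apply hpq; funext j
    have e0 : ((p 0:ℤ):ℝ) = ((q 0:ℤ):ℝ) := by
      nlinarith [sq_nonneg ((p 0:ℝ) - (q 0:ℝ)), sq_nonneg ((p 1:ℝ) - (q 1:ℝ))]
    have e1 : ((p 1:ℤ):ℝ) = ((q 1:ℤ):ℝ) := by
      nlinarith [sq_nonneg ((p 0:ℝ) - (q 0:ℝ)), sq_nonneg ((p 1:ℝ) - (q 1:ℝ))]
    fin_cases j
    · exact_mod_cast e0
    · exact_mod_cast e1
  have ha := hpos k₁ k₂ h12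
  have hb := hpos k₂ k₃ h23
  have he := hpos k₃ k₁ (fun h => h13 h.symm)
  set u1 : ℝ := (k₁ 0:ℝ) - c 0
  set u2 : ℝ := (k₁ 1:ℝ) - c 1
  set v1 : ℝ := (k₂ 0:ℝ) - c 0
  set v2 : ℝ := (k₂ 1:ℝ) - c 1
  set w1 : ℝ := (k₃ 0:ℝ) - c 0
  set w2 : ℝ := (k₃ 1:ℝ) - c 1
  have hcore := core T u1 u2 v1 v2 w1 w2 _ _ _
    ((k₂ 0 - k₁ 0) * (k₃ 1 - k₁ 1) - (k₂ 1 - k₁ 1) * (k₃ 0 - k₁ 0)) hT hU hV hW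
    (by push_cast; ring)
    (by have h := euclNorm_sq2 (fun i => (k₁ i : ℝ) - (k₂ i : ℝ)); rw [h]; ring)
    (by have h := euclNorm_sq2 (fun i => (k₂ i : ℝ) - (k₃ i : ℝ)); rw [h]; ring)
    (by have h := euclNorm_sq2 (fun i => (k₃ i : ℝ) - (k₁ i : ℝ)); rw [h]; ring)
    ha hb he
  refine le_trans hcore ?_
  set A := euclNorm (fun i => (k₁ i : ℝ) - (k₂ i : ℝ))
  set B := euclNorm (fun i => (k₂ i : ℝ) - (k₃ i : ℝ))
  set E := euclNorm (fun i => (k₃ i : ℝ) - (k₁ i : ℝ))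
  have hMa : A ≤ max (max A B) E := le_trans (le_max_left A B) (le_max_left _ _)
  have hMb : B ≤ max (max A B) E := le_trans (le_max_right A B) (le_max_left _ _)
  have hMe : E ≤ max (max A B) E := le_max_right _ _
  calc A * B * E ≤ (max (max A B) E) * (max (max A B) E) * (max (max A B) E) := by
        apply mul_le_mul (mul_le_mul hMa hMb (le_of_lt hb) (le_trans (le_of_lt ha) hMa)) hMe
          (le_of_lt he)
        positivity
    _ = (max (max A B) E) ^ 3 := by ring
end

section
/- For every R > 0 there exists λ₀ > 0 such that for every λ ≥ λ₀ and every unit vector ξ ∈ ℝ², the number of lattice points k ∈ ℤ² with ‖k‖ = λ and |⟨k, ξ⟩| ≤ R is at most 4. -/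
open MeasureTheory Filter Topology

lemma coll_aux (u0 u1 v0 v1 r0 r1 : ℤ)
    (h3 : u0^2+u1^2 + 2*(r0*u0 + r1*u1) = 0)
    (h4 : v0^2+v1^2 + 2*(r0*v0 + r1*v1) = 0)
    (hd : u0*v1 = v0*u1)
    (hu : ¬(u0 = 0 ∧ u1 = 0)) (hv : ¬(v0 = 0 ∧ v1 = 0)) :
    u0 = v0 ∧ u1 = v1 := by
  have h1 : (u0^2+u1^2)*v0 = (u0*v0+u1*v1)*u0 := by linear_combination (-u1) * hd
  have h2 : (u0^2+u1^2)*v1 = (u0*v0+u1*v1)*u1 := by linear_combination u0 * hd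
  have hLag : (u0^2+u1^2)*(v0^2+v1^2) = (u0*v0+u1*v1)^2 := by
    linear_combination (u0*v1 - v0*u1) * hd
  have hkey : (u0*v0+u1*v1)*((u0*v0+u1*v1) - (u0^2+u1^2)) = 0 := by
    linear_combination (-1)*hLag + (u0^2+u1^2)*h4 - 2*r0*h1 - 2*r1*h2 - (u0*v0+u1*v1)*h3
  have he0 : u0^2+u1^2 ≠ 0 := by
    intro h
    exact hu ⟨by nlinarith [sq_nonneg u0, sq_nonneg u1], by nlinarith [sq_nonneg u0, sq_nonneg u1]⟩
  rcases mul_eq_zero.mp hkey with h0 | h0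
  · exfalso
    have h' : (u0^2+u1^2) * (v0^2+v1^2) = 0 := by rw [hLag, h0]; ring
    have hV : v0^2 + v1^2 = 0 := by
      rcases mul_eq_zero.mp h' with h | h
      · exact absurd h he0
      · exact h
    exact hv ⟨by nlinarith [sq_nonneg v0, sq_nonneg v1], by nlinarith [sq_nonneg v0, sq_nonneg v1]⟩
  · have hme : u0*v0+u1*v1 = u0^2+u1^2 := by omega
    rw [hme] at h1 h2
    exact ⟨(mul_left_cancel₀ he0 h1).symm, (mul_left_cancel₀ he0 h2).symm⟩

lemma collinear_circle (p0 p1 q0 q1 r0 r1 : ℤ)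
    (hp : p0^2+p1^2 = r0^2+r1^2) (hq : q0^2+q1^2 = r0^2+r1^2)
    (hd : (p0-r0)*(q1-r1) = (q0-r0)*(p1-r1))
    (hpr : ¬(p0 = r0 ∧ p1 = r1)) (hqr : ¬(q0 = r0 ∧ q1 = r1)) :
    p0 = q0 ∧ p1 = q1 := by
  have := coll_aux (p0-r0) (p1-r1) (q0-r0) (q1-r1) r0 r1
    (by linear_combination hp) (by linear_combination hq) hd
    (fun h => hpr ⟨by omega, by omega⟩) (fun h => hqr ⟨by omega, by omega⟩)
  exact ⟨by omega, by omega⟩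

lemma half_le (R lam t s : ℝ) (hR : 0 < R) (hlamR : 2*R ≤ lam)
    (hts : t^2 + s^2 = lam^2) (ht2 : t^2 ≤ R^2) (hs : 0 < s) : lam/2 ≤ s := by
  by_contra h
  push_neg at h
  have h1 : s*s < (lam/2)*(lam/2) := mul_lt_mul'' h h hs.le hs.le
  have h2 : R*R ≤ (lam/2)*(lam/2) := mul_le_mul (by linarith) (by linarith) hR.le (by linarith)
  nlinarith

lemma core_real (R lam tp tq tr sp sq sr : ℝ) (hR : 0 < R)
    (hlam : 2*R + 4*R^3 + 1 ≤ lam)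
    (hps : tp^2 + sp^2 = lam^2) (hqs : tq^2 + sq^2 = lam^2) (hrs : tr^2 + sr^2 = lam^2)
    (htp : |tp| ≤ R) (htq : |tq| ≤ R) (htr : |tr| ≤ R)
    (hsp : 0 < sp) (hsq : 0 < sq) (hsr : 0 < sr)
    (hD : 1 ≤ |(tp - tr)*(sq - sr) - (tq - tr)*(sp - sr)|) : False := by
  have hR3 : 0 < R^3 := by positivity
  have hlam0 : 0 < lam := by nlinarith
  have hlamR : 2*R ≤ lam := by nlinarith
  have htp' := abs_le.mp htp
  have htq' := abs_le.mp htq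
  have htr' := abs_le.mp htr
  have htp2 : tp^2 ≤ R^2 := sq_le_sq' htp'.1 htp'.2
  have htq2 : tq^2 ≤ R^2 := sq_le_sq' htq'.1 htq'.2
  have htr2 : tr^2 ≤ R^2 := sq_le_sq' htr'.1 htr'.2
  have hsp2 : lam/2 ≤ sp := half_le R lam tp sp hR hlamR hps htp2 hsp
  have hsq2 : lam/2 ≤ sq := half_le R lam tq sq hR hlamR hqs htq2 hsq
  have hsr2 : lam/2 ≤ sr := half_le R lam tr sr hR hlamR hrs htr2 hsr
  have hBq : |sq - sr| * lam ≤ R^2 := by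
    have hprod : (sq - sr) * (sq + sr) = tr^2 - tq^2 := by linear_combination hqs - hrs
    calc |sq - sr| * lam ≤ |sq - sr| * (sq + sr) := by
          apply mul_le_mul_of_nonneg_left (by linarith) (abs_nonneg _)
      _ = |(sq - sr) * (sq + sr)| := by
          rw [abs_mul, abs_of_nonneg (by linarith : (0:ℝ) ≤ sq + sr)]
      _ = |tr^2 - tq^2| := by rw [hprod]
      _ ≤ R^2 := abs_le.mpr ⟨by linarith [sq_nonneg tr, sq_nonneg tq],
          by linarith [sq_nonneg tr, sq_nonneg tq]⟩
  have hBp : |sp - sr| * lam ≤ R^2 := by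
    have hprod : (sp - sr) * (sp + sr) = tr^2 - tp^2 := by linear_combination hps - hrs
    calc |sp - sr| * lam ≤ |sp - sr| * (sp + sr) := by
          apply mul_le_mul_of_nonneg_left (by linarith) (abs_nonneg _)
      _ = |(sp - sr) * (sp + sr)| := by
          rw [abs_mul, abs_of_nonneg (by linarith : (0:ℝ) ≤ sp + sr)]
      _ = |tr^2 - tp^2| := by rw [hprod]
      _ ≤ R^2 := abs_le.mpr ⟨by linarith [sq_nonneg tr, sq_nonneg tp],
          by linarith [sq_nonneg tr, sq_nonneg tp]⟩
  have hAp : |tp - tr| ≤ 2*R := (abs_sub _ _).trans (by linarith)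
  have hAq : |tq - tr| ≤ 2*R := (abs_sub _ _).trans (by linarith)
  have habs : |(tp - tr)*(sq - sr) - (tq - tr)*(sp - sr)|
      ≤ |tp - tr| * |sq - sr| + |tq - tr| * |sp - sr| := by
    calc |(tp - tr)*(sq - sr) - (tq - tr)*(sp - sr)|
        ≤ |(tp - tr)*(sq - sr)| + |(tq - tr)*(sp - sr)| := abs_sub _ _
      _ = |tp - tr| * |sq - sr| + |tq - tr| * |sp - sr| := by rw [abs_mul, abs_mul]
  have hfin : lam ≤ 4*R^3 := by
    have e1 : |tp - tr| * (|sq - sr| * lam) ≤ (2*R) * R^2 :=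
      mul_le_mul hAp hBq (by positivity) (by linarith)
    have e2 : |tq - tr| * (|sp - sr| * lam) ≤ (2*R) * R^2 :=
      mul_le_mul hAq hBp (by positivity) (by linarith)
    calc lam = 1 * lam := (one_mul lam).symm
      _ ≤ |(tp - tr)*(sq - sr) - (tq - tr)*(sp - sr)| * lam :=
          mul_le_mul_of_nonneg_right hD hlam0.le
      _ ≤ (|tp - tr| * |sq - sr| + |tq - tr| * |sp - sr|) * lam :=
          mul_le_mul_of_nonneg_right habs hlam0.le
      _ = |tp - tr| * (|sq - sr| * lam) + |tq - tr| * (|sp - sr| * lam) := by ring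
      _ ≤ (2*R) * R^2 + (2*R) * R^2 := add_le_add e1 e2
      _ = 4*R^3 := by ring
  linarith

lemma core_real2 (R lam a b xp yp xq yq xr yr : ℝ) (hR : 0 < R)
    (hlam : 2*R + 4*R^3 + 1 ≤ lam) (hab : a^2 + b^2 = 1)
    (hp : xp^2 + yp^2 = lam^2) (hq : xq^2 + yq^2 = lam^2) (hr : xr^2 + yr^2 = lam^2)
    (htp : |xp*a + yp*b| ≤ R) (htq : |xq*a + yq*b| ≤ R) (htr : |xr*a + yr*b| ≤ R)
    (hsp : 0 < -xp*b + yp*a) (hsq : 0 < -xq*b + yq*a) (hsr : 0 < -xr*b + yr*a)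
    (hD : 1 ≤ |(xp - xr)*(yq - yr) - (xq - xr)*(yp - yr)|) : False := by
  apply core_real R lam (xp*a + yp*b) (xq*a + yq*b) (xr*a + yr*b)
    (-xp*b + yp*a) (-xq*b + yq*a) (-xr*b + yr*a) hR hlam
    (by linear_combination (xp^2+yp^2)*hab + hp)
    (by linear_combination (xq^2+yq^2)*hab + hq)
    (by linear_combination (xr^2+yr^2)*hab + hr)
    htp htq htr hsp hsq hsr
  have hid : ((xp*a + yp*b) - (xr*a + yr*b))*((-xq*b + yq*a) - (-xr*b + yr*a))
      - ((xq*a + yq*b) - (xr*a + yr*b))*((-xp*b + yp*a) - (-xr*b + yr*a))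
      = (xp - xr)*(yq - yr) - (xq - xr)*(yp - yr) := by
    linear_combination ((xp - xr)*(yq - yr) - (xq - xr)*(yp - yr)) * hab
  rw [hid]
  exact hD

/-- For every `R > 0` there is `λ₀ > 0` such that for every `λ ≥ λ₀` and every unit vector
`ξ ∈ ℝ²`, at most `4` lattice points `k ∈ ℤ²` satisfy `‖k‖ = λ` and `|⟨k, ξ⟩| ≤ R`. -/
theorem statement9 (R : ℝ) (hR : 0 < R) :
    ∃ lam₀ > (0:ℝ), ∀ lam : ℝ, lam₀ ≤ lam → ∀ ξ : Fin 2 → ℝ, euclNorm ξ = 1 →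
      {k : Fin 2 → ℤ | euclNorm (fun i => (k i : ℝ)) = lam ∧
        |dotp (fun i => (k i : ℝ)) ξ| ≤ R}.ncard ≤ 4 := by
  refine ⟨2*R + 4*R^3 + 1, by positivity, ?_⟩
  intro lam hlam ξ hξ
  have hR3 : 0 < R^3 := by positivity
  have hlam0 : 0 < lam := by nlinarith
  have hab : (ξ 0)^2 + (ξ 1)^2 = 1 := by
    have h := hξ
    simp only [euclNorm, Fin.sum_univ_two] at h
    exact Real.sqrt_eq_one.mp h
  set S := {k : Fin 2 → ℤ | euclNorm (fun i => (k i : ℝ)) = lam ∧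
      |dotp (fun i => (k i : ℝ)) ξ| ≤ R} with hSdef
  have hmem : ∀ k : Fin 2 → ℤ, k ∈ S ↔
      (((k 0:ℝ))^2 + ((k 1:ℝ))^2 = lam^2 ∧ |(k 0:ℝ)*ξ 0 + (k 1:ℝ)*ξ 1| ≤ R) := by
    intro k
    simp only [hSdef, Set.mem_setOf_eq, euclNorm, dotp, Fin.sum_univ_two]
    constructor
    · rintro ⟨h1, h2⟩
      refine ⟨?_, h2⟩
      rw [← h1]
      rw [Real.sq_sqrt (by positivity)]
    · rintro ⟨h1, h2⟩
      refine ⟨?_, h2⟩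
      rw [h1, Real.sqrt_sq hlam0.le]
  have hfx : ∀ k l : Fin 2 → ℤ, k 0 = l 0 → k 1 = l 1 → k = l := by
    intro k l h0 h1; funext i; fin_cases i <;> assumption
  -- the triple claim
  have tri : ∀ a b : ℝ, a^2 + b^2 = 1 →
      ∀ p q r : Fin 2 → ℤ, p ∈ S → q ∈ S → r ∈ S →
      (∀ k : Fin 2 → ℤ, (k 0:ℝ)*ξ 0 + (k 1:ℝ)*ξ 1 = (k 0:ℝ)*a + (k 1:ℝ)*b ∨
        (k 0:ℝ)*ξ 0 + (k 1:ℝ)*ξ 1 = -((k 0:ℝ)*a + (k 1:ℝ)*b)) →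
      0 < -(p 0:ℝ)*b + (p 1:ℝ)*a → 0 < -(q 0:ℝ)*b + (q 1:ℝ)*a →
      0 < -(r 0:ℝ)*b + (r 1:ℝ)*a →
      p = q ∨ p = r ∨ q = r := by
    intro a b hab' p q r hp hq hr habs hsp hsq hsr
    by_contra hcon
    push_neg at hcon
    obtain ⟨hpq, hpr, hqr⟩ := hcon
    obtain ⟨hp1, hp2⟩ := (hmem p).mp hp
    obtain ⟨hq1, hq2⟩ := (hmem q).mp hq
    obtain ⟨hr1, hr2⟩ := (hmem r).mp hr
    -- transfer dot-product bounds to (a, b)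
    have hp2' : |(p 0:ℝ)*a + (p 1:ℝ)*b| ≤ R := by
      rcases habs p with h | h
      · rw [← h]; exact hp2
      · rw [← abs_neg, ← h]; exact hp2
    have hq2' : |(q 0:ℝ)*a + (q 1:ℝ)*b| ≤ R := by
      rcases habs q with h | h
      · rw [← h]; exact hq2
      · rw [← abs_neg, ← h]; exact hq2
    have hr2' : |(r 0:ℝ)*a + (r 1:ℝ)*b| ≤ R := by
      rcases habs r with h | h
      · rw [← h]; exact hr2
      · rw [← abs_neg, ← h]; exact hr2
    -- integer circle equalities
    have hiPR : (p 0)^2 + (p 1)^2 = (r 0)^2 + (r 1)^2 := by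
      have h : ((p 0:ℝ))^2 + ((p 1:ℝ))^2 = ((r 0:ℝ))^2 + ((r 1:ℝ))^2 := by rw [hp1, hr1]
      exact_mod_cast h
    have hiQR : (q 0)^2 + (q 1)^2 = (r 0)^2 + (r 1)^2 := by
      have h : ((q 0:ℝ))^2 + ((q 1:ℝ))^2 = ((r 0:ℝ))^2 + ((r 1:ℝ))^2 := by rw [hq1, hr1]
      exact_mod_cast h
    have hd : ((p 0 - r 0)*(q 1 - r 1) - (q 0 - r 0)*(p 1 - r 1) : ℤ) ≠ 0 := by
      intro h
      have hdeq : (p 0 - r 0)*(q 1 - r 1) = (q 0 - r 0)*(p 1 - r 1) := by linarith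
      have := collinear_circle (p 0) (p 1) (q 0) (q 1) (r 0) (r 1) hiPR hiQR hdeq
        (fun hh => hpr (hfx p r hh.1 hh.2)) (fun hh => hqr (hfx q r hh.1 hh.2))
      exact hpq (hfx p q this.1 this.2)
    have hD1 : (1:ℝ) ≤ |((p 0:ℝ) - (r 0:ℝ))*((q 1:ℝ) - (r 1:ℝ))
        - ((q 0:ℝ) - (r 0:ℝ))*((p 1:ℝ) - (r 1:ℝ))| := by
      have h1 : (1:ℤ) ≤ |(p 0 - r 0)*(q 1 - r 1) - (q 0 - r 0)*(p 1 - r 1)| :=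
        Int.one_le_abs hd
      exact_mod_cast h1
    exact core_real2 R lam a b (p 0:ℝ) (p 1:ℝ) (q 0:ℝ) (q 1:ℝ) (r 0:ℝ) (r 1:ℝ)
      hR hlam hab' hp1 hq1 hr1 hp2' hq2' hr2'
      (by linarith) (by linarith) (by linarith) hD1
  -- partition by the sign of s
  set T1 := S ∩ {k : Fin 2 → ℤ | 0 < -(k 0:ℝ)*ξ 1 + (k 1:ℝ)*ξ 0} with hT1def
  set T2 := S ∩ {k : Fin 2 → ℤ | -(k 0:ℝ)*ξ 1 + (k 1:ℝ)*ξ 0 < 0} with hT2def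
  have hcover : S ⊆ T1 ∪ T2 := by
    intro k hk
    obtain ⟨h1, h2⟩ := (hmem k).mp hk
    have hts : ((k 0:ℝ)*ξ 0 + (k 1:ℝ)*ξ 1)^2 + (-(k 0:ℝ)*ξ 1 + (k 1:ℝ)*ξ 0)^2 = lam^2 := by
      linear_combination (((k 0:ℝ))^2 + ((k 1:ℝ))^2)*hab + h1
    have hs0 : -(k 0:ℝ)*ξ 1 + (k 1:ℝ)*ξ 0 ≠ 0 := by
      intro h
      have ht' := abs_le.mp h2
      have ht2 : ((k 0:ℝ)*ξ 0 + (k 1:ℝ)*ξ 1)^2 ≤ R^2 := sq_le_sq' ht'.1 ht'.2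
      nlinarith
    rcases lt_or_gt_of_ne hs0 with h | h
    · exact Or.inr ⟨hk, h⟩
    · exact Or.inl ⟨hk, h⟩
  -- each part has at most 2 elements
  have key : ∀ T : Set (Fin 2 → ℤ), T ⊆ S →
      (∀ p q r : Fin 2 → ℤ, p ∈ T → q ∈ T → r ∈ T → p = q ∨ p = r ∨ q = r) →
      T.ncard ≤ 2 ∧ T.Finite := by
    intro T hTS htri
    rcases T.eq_empty_or_nonempty with rfl | ⟨x, hx⟩
    · simp
    · by_cases hone : ∀ y ∈ T, y = x
      · have hsub : T ⊆ {x} := fun y hy => hone y hy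
        have hfin : T.Finite := (Set.finite_singleton x).subset hsub
        refine ⟨?_, hfin⟩
        calc T.ncard ≤ ({x} : Set (Fin 2 → ℤ)).ncard :=
              Set.ncard_le_ncard hsub (Set.finite_singleton x)
          _ = 1 := Set.ncard_singleton x
          _ ≤ 2 := by norm_num
      · push_neg at hone
        obtain ⟨y, hy, hyx⟩ := hone
        have hsub : T ⊆ {x, y} := by
          intro z hz
          rcases htri x y z hx hy hz with h | h | h
          · exact absurd h.symm hyx
          · exact Or.inl h.symm
          · exact Or.inr h.symm
        have hfinxy : ({x, y} : Set (Fin 2 → ℤ)).Finite :=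
          (Set.finite_singleton y).insert x
        refine ⟨?_, hfinxy.subset hsub⟩
        calc T.ncard ≤ ({x, y} : Set (Fin 2 → ℤ)).ncard :=
              Set.ncard_le_ncard hsub hfinxy
          _ ≤ ({y} : Set (Fin 2 → ℤ)).ncard + 1 := Set.ncard_insert_le x {y}
          _ = 2 := by rw [Set.ncard_singleton]
  have h1 := key T1 Set.inter_subset_left (by
    intro p q r hp hq hr
    exact tri (ξ 0) (ξ 1) hab p q r hp.1 hq.1 hr.1
      (fun k => Or.inl rfl) hp.2 hq.2 hr.2)
  have h2 := key T2 Set.inter_subset_left (by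
    intro p q r hp hq hr
    have habm : (-(ξ 0))^2 + (-(ξ 1))^2 = 1 := by linear_combination hab
    refine tri (-(ξ 0)) (-(ξ 1)) habm p q r hp.1 hq.1 hr.1
      (fun k => Or.inr (by ring)) ?_ ?_ ?_
    · have := hp.2; simp only [Set.mem_setOf_eq] at this; nlinarith
    · have := hq.2; simp only [Set.mem_setOf_eq] at this; nlinarith
    · have := hr.2; simp only [Set.mem_setOf_eq] at this; nlinarith)
  calc S.ncard ≤ (T1 ∪ T2).ncard :=
        Set.ncard_le_ncard hcover (h1.2.union h2.2)
    _ ≤ T1.ncard + T2.ncard := Set.ncard_union_le T1 T2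
    _ ≤ 2 + 2 := add_le_add h1.1 h2.1
    _ = 4 := by norm_num
end

section
/- Let a : [0,π] × [0,2π] → ℝ be continuous. Then lim_{l→+∞} [∫₀^π ∫₀^{2π} a(θ,φ) (sin θ)^{2l+1} dφ dθ] / [2π ∫₀^π (sin θ)^{2l+1} dθ] = (1/2π) ∫₀^{2π} a(π/2, φ) dφ. -/
/-!
Integrating out `φ` first reduces the statement to the one-variable average of the continuous
function `θ ↦ ∫₀^{2π} a(θ, φ) dφ` against the weights `sin^n θ` on `[0, π]`. These weights
form a peak family: `sin` is nonnegative on `[0, π]` and attains its maximum `1` only at `π/2`,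
so the weighted averages converge to the value at `π/2`.
-/

open MeasureTheory Filter Topology Real Set

theorem Real.sin_lt_one_of_mem_Icc_of_ne {y : ℝ} (hy : y ∈ Icc 0 π) (hne : y ≠ π / 2) :
    sin y < 1 := by
  have hcos : cos y ≠ 0 := fun h =>
    hne (injOn_cos hy ⟨by linarith [pi_pos], by linarith [pi_pos]⟩ (by rw [h, cos_pi_div_two]))
  refine (sin_le_one y).lt_of_ne fun h => hcos ?_
  nlinarith [sin_sq_add_cos_sq y]

theorem ContinuousOn.parametric_intervalIntegral {X : Type*} [TopologicalSpace X]
    [NormalSpace (X × ℝ)] {s : Set X} (hs : IsClosed s) {c d : ℝ} {f : X × ℝ → ℝ}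
    (hf : ContinuousOn f (s ×ˢ uIcc c d)) :
    ContinuousOn (fun x => ∫ y in c..d, f (x, y)) s := by
  obtain ⟨F, hF⟩ := ContinuousMap.exists_restrict_eq (hs.prod isClosed_Icc) ⟨_, hf.domRestrict⟩
  have hFf : ∀ p ∈ s ×ˢ uIcc c d, F p = f p := fun p hp => congr($hF ⟨p, hp⟩)
  refine (intervalIntegral.continuous_parametric_intervalIntegral_of_continuous' (μ := volume)
    (f := fun x y => F (x, y)) F.continuous c d).continuousOn.congr fun x hx => ?_
  exact intervalIntegral.integral_congr fun y hy => (hFf (x, y) ⟨hx, hy⟩).symm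

theorem tendsto_integral_mul_sin_pow_div {g : ℝ → ℝ} (hg : ContinuousOn g (Icc 0 π)) :
    Tendsto (fun n : ℕ => (∫ θ in 0..π, g θ * sin θ ^ n) / ∫ θ in 0..π, sin θ ^ n) atTop
      (𝓝 (g (π / 2))) := by
  have hpeak := tendsto_setIntegral_pow_smul_of_unique_maximum_of_isCompact_of_continuousOn
    (μ := volume) isCompact_Icc continuous_sin.continuousOn
    (fun y hy hne => by rw [sin_pi_div_two]; exact sin_lt_one_of_mem_Icc_of_ne hy hne)
    (fun x hx => sin_nonneg_of_nonneg_of_le_pi hx.1 hx.2) (by rw [sin_pi_div_two]; norm_num)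
    (by rw [interior_Icc, closure_Ioo pi_pos.ne]; constructor <;> linarith [pi_pos]) hg
  refine hpeak.congr fun n => ?_
  simp only [intervalIntegral.integral_of_le pi_pos.le, ← integral_Icc_eq_integral_Ioc,
    smul_eq_mul, mul_comm (g _)]
  rw [inv_mul_eq_div]

/-- **Concentration of highest-weight spherical harmonics on the equator**: for every
continuous `a` on `[0,π] × [0,2π]`,
`(∫₀^π ∫₀^{2π} a(θ,φ) sin^{2l+1}θ dφ dθ) / (2π ∫₀^π sin^{2l+1}θ dθ)
  → (1/2π) ∫₀^{2π} a(π/2, φ) dφ` as `l → ∞`. -/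
theorem statement11 (a : ℝ × ℝ → ℝ)
    (ha : ContinuousOn a (Set.Icc 0 Real.pi ×ˢ Set.Icc 0 (2*Real.pi))) :
    Tendsto
      (fun l : ℕ =>
        (∫ θ in (0:ℝ)..Real.pi, ∫ φ in (0:ℝ)..(2*Real.pi),
            a (θ, φ) * (Real.sin θ) ^ (2*l+1)) /
          (2*Real.pi * ∫ θ in (0:ℝ)..Real.pi, (Real.sin θ) ^ (2*l+1)))
      atTop
      (𝓝 ((1/(2*Real.pi)) * ∫ φ in (0:ℝ)..(2*Real.pi), a (Real.pi/2, φ))) := by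
  rw [← uIcc_of_le (by positivity : (0:ℝ) ≤ 2 * π)] at ha
  have hg := ha.parametric_intervalIntegral isClosed_Icc
  have hodd : Tendsto (fun l : ℕ => 2 * l + 1) atTop atTop :=
    tendsto_atTop_mono (fun l => by dsimp; omega) tendsto_id
  refine ((tendsto_integral_mul_sin_pow_div hg).comp hodd |>.const_mul (1 / (2 * π))).congr
    fun l => ?_
  simp only [Function.comp_apply, intervalIntegral.integral_mul_const]
  ring
end
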